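/- Let n ≥ 2 and let M be the function satisfying M(x) = -x for x < 0, and for x ≥ 0, M(x) = tₙ(x)/n where t₀(x) = 1 and t_{i+1}(x) = M(x - tᵢ(x)). Suppose M(x) is defined. Then for all d with 0 ≤ d < M(x), M(x+d) is defined and M(x+d) = M(x) - d. -/
import Mathlib


/-- The computation graph of the `n`-fuse algorithm `Mₙ`:
`Mₙ(x) = -x` for `x < 0`; for `x ≥ 0`, `Mₙ(x) = tₙ(x)/n` where `t₀(x) = 1` and
`t_{i+1}(x) = Mₙ(x - tᵢ(x))`.  `MnGraph n x y` means the recursive computation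
of `Mₙ` on input `x` terminates with output `y`. -/
inductive MnGraph (n : ℕ) : ℝ → ℝ → Prop
  | neg (x : ℝ) : x < 0 → MnGraph n x (-x)
  | nonneg (x : ℝ) (t : ℕ → ℝ) : 0 ≤ x → t 0 = 1 →
      (∀ i < n, MnGraph n (x - t i) (t (i + 1))) → MnGraph n x (t n / n)

lemma MnGraph.pos {n : ℕ} (hn : 1 ≤ n) {x y : ℝ} (h : MnGraph n x y) : 0 < y := by
  induction h with
  | neg x hx => linarith
  | nonneg x t hx ht0 h ih =>
    have hn' : n - 1 < n := Nat.sub_lt hn one_pos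
    have h1 := ih (n - 1) hn'
    rw [Nat.sub_add_cancel hn] at h1
    have hn0 : (0:ℝ) < n := by exact_mod_cast Nat.lt_of_lt_of_le Nat.zero_lt_one hn
    exact div_pos h1 hn0

lemma MnGraph.det {n : ℕ} {x y : ℝ} (h : MnGraph n x y) :
    ∀ y', MnGraph n x y' → y = y' := by
  induction h with
  | neg x hx =>
    intro y' h'
    cases h' with
    | neg _ _ => rfl
    | nonneg _ t hx' _ _ => linarith
  | nonneg x t hx ht0 h ih =>
    intro y' h'
    cases h' with
    | neg _ hx' => linarith
    | nonneg _ s hx' hs0 hs =>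
      have key : ∀ i, i ≤ n → t i = s i := by
        intro i hi
        induction i with
        | zero => rw [ht0, hs0]
        | succ i ihh =>
          have hi' : i < n := hi
          have hts : t i = s i := ihh hi'.le
          exact ih i hi' (s (i + 1)) (by rw [hts]; exact hs i hi')
      rw [key n le_rfl]

/-- If `Mₙ(x)` is defined then for all `0 ≤ d < Mₙ(x)`, `Mₙ(x+d)` is defined
and equals `Mₙ(x) - d`. -/
theorem Mn_shift (n : ℕ) (hn : 2 ≤ n) (x y : ℝ) (hxy : MnGraph n x y)
    (d : ℝ) (hd0 : 0 ≤ d) (hdy : d < y) :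
    MnGraph n (x + d) (y - d) := by
  classical
  revert d
  induction hxy with
  | neg x hx =>
    intro d hd0 hdy
    have hxd : x + d < 0 := by linarith
    have h := MnGraph.neg (n := n) (x + d) hxd
    have e : -(x + d) = -x - d := by ring
    rwa [e] at h
  | nonneg x t hx ht0 h ih =>
    intro d hd0 hdy
    have hn0 : (0:ℝ) < n := by
      have : 0 < n := Nat.lt_of_lt_of_le Nat.zero_lt_one (le_trans one_le_two hn)
      exact_mod_cast this
    have hnd : (n:ℝ) * d < t n := by
      have := (lt_div_iff₀ hn0).mp hdy
      linarith [this]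
    by_cases good : ∀ j, 1 ≤ j → j ≤ n → (j:ℝ) * d < t j
    · have H := MnGraph.nonneg (n := n) (x + d) (fun j => t j - (j:ℝ) * d)
        (by linarith) (by simp [ht0])
        (by
          intro i hi
          have h2 : ((i:ℝ) + 1) * d < t (i + 1) := by
            have := good (i + 1) (Nat.succ_le_succ (Nat.zero_le i)) hi
            push_cast at this
            linarith
          have h1 : (0:ℝ) ≤ ((i:ℝ) + 1) * d := by positivity
          have H := ih i hi (((i:ℝ) + 1) * d) h1 h2
          have e1 : x - t i + ((i:ℝ) + 1) * d = x + d - (t i - (i:ℝ) * d) := by ring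
          rw [e1] at H
          simpa [sub_sub] using H)
      have e2 : (t n - (n:ℝ) * d) / n = t n / n - d := by
        field_simp
      rwa [e2] at H
    · push_neg at good
      obtain ⟨j0, hj01, hj0n, hj0bad⟩ := good
      set P : ℕ → Prop := fun j => t j ≤ (j:ℝ) * d with hP
      set J := Nat.findGreatest P n with hJdef
      have hPJ : P J := Nat.findGreatest_spec hj0n hj0bad
      have hJ1 : 1 ≤ J := le_trans hj01 (Nat.le_findGreatest hj0n hj0bad)
      have hJle : J ≤ n := Nat.findGreatest_le n
      have hJn : J < n := by
        rcases lt_or_eq_of_le hJle with h' | h'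
        · exact h'
        · exfalso
          rw [h'] at hPJ
          exact absurd hPJ (not_le.mpr hnd)
      have hnotP : ¬ P (J + 1) := Nat.findGreatest_is_greatest (Nat.lt_succ_self J) hJn
      have hJ1d : ((J:ℝ) + 1) * d < t (J + 1) := by
        have := not_le.mp hnotP
        push_cast at this
        linarith
      have htJpos : 0 < t J := by
        obtain ⟨k, hk⟩ : ∃ k, J = k + 1 := ⟨J - 1, (Nat.succ_pred_eq_of_pos hJ1).symm⟩
        rw [hk]
        exact MnGraph.pos (le_trans one_le_two hn) (h k (by omega))
      have htJ : t J ≤ (J:ℝ) * d := hPJ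
      have shift1 := ih J hJn (t J + d) (by linarith)
        (by nlinarith [mul_le_mul_of_nonneg_right (by exact_mod_cast Nat.le_succ J :
              (J:ℝ) ≤ (J:ℝ) + 1) hd0])
      have shift2 := ih J hJn (t J) htJpos.le
        (by nlinarith [mul_le_mul_of_nonneg_right (by exact_mod_cast Nat.le_succ J :
              (J:ℝ) ≤ (J:ℝ) + 1) hd0])
      have e0 : x - t J + t J = x := by ring
      rw [e0] at shift2
      have node : MnGraph n x (t n / n) := MnGraph.nonneg x t hx ht0 h
      have hval : t n / n = t (J + 1) - t J := node.det _ shift2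
      have e1 : x - t J + (t J + d) = x + d := by ring
      have e2 : t (J + 1) - (t J + d) = t n / n - d := by rw [hval]; ring
      rw [e1, e2] at shift1
      exact shift1
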